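/- arXiv:math/0605439 — 8 statements merged into one kernel-verified Lean document; each statement's English description precedes it below -/
import Mathlib

section
/- If the Booleanization T(f) of a monomial system f has only fixed points as limit cycles, then for any periodic point u of f (i.e., f^t(u) = u for some t ≥ 1), all iterates f^i(u) have the same support as u. -/
/-- The monomial dynamical system with exponent matrix `A`. -/
def monomialMap {K : Type*} [CommRing K] {n : ℕ} (A : Matrix (Fin n) (Fin n) ℕ)
    (x : Fin n → K) : Fin n → K := fun i => ∏ j, x j ^ A i j

/-- The exponent matrix of the Booleanization `T(f)`. -/
def boolMat {n : ℕ} (A : Matrix (Fin n) (Fin n) ℕ) : Matrix (Fin n) (Fin n) ℕ :=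
  fun i j => if 0 < A i j then 1 else 0

/-- The support of a vector, as a vector over `F_2`. -/
def supp {K : Type*} [Zero K] [DecidableEq K] {n : ℕ} (u : Fin n → K) : Fin n → ZMod 2 :=
  fun i => if u i = 0 then 0 else 1

/-- A fixed point system: every periodic point is a fixed point. -/
def IsFixedPointSystem {X : Type*} (g : X → X) : Prop :=
  ∀ x, (∃ t, 0 < t ∧ g^[t] x = x) → g x = x

/-!
Over a domain, `f(u)ᵢ = 0` exactly when `uⱼ = 0` for some `j` with `Aᵢⱼ > 0`, so `supp ∘ f = T(f) ∘ supp`.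
Hence the supports along a periodic orbit of `f` form a periodic orbit of `T(f)`, which is a single
fixed point.
-/

theorem ZMod.two_eq_of_eq_zero_iff {a b : ZMod 2} (h : a = 0 ↔ b = 0) : a = b := by
  revert a b; decide

section MonomialMap

variable {K : Type*} [CommRing K] {n : ℕ}

theorem monomialMap_apply_eq_zero_iff [IsDomain K] (A : Matrix (Fin n) (Fin n) ℕ)
    (x : Fin n → K) (i : Fin n) :
    monomialMap A x i = 0 ↔ ∃ j, x j = 0 ∧ A i j ≠ 0 := by
  simp [monomialMap, Finset.prod_eq_zero_iff, pow_eq_zero_iff']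

theorem boolMat_apply_ne_zero_iff (A : Matrix (Fin n) (Fin n) ℕ) (i j : Fin n) :
    boolMat A i j ≠ 0 ↔ A i j ≠ 0 := by
  simp [boolMat, Nat.pos_iff_ne_zero]

theorem supp_apply_eq_zero_iff [DecidableEq K] (u : Fin n → K) (i : Fin n) :
    supp u i = 0 ↔ u i = 0 := by
  simp [supp]

theorem supp_monomialMap [IsDomain K] [DecidableEq K] (A : Matrix (Fin n) (Fin n) ℕ) :
    Function.Semiconj supp (monomialMap (K := K) A) (monomialMap (boolMat A)) := fun u => by
  funext i
  apply ZMod.two_eq_of_eq_zero_iff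
  simp only [supp_apply_eq_zero_iff, monomialMap_apply_eq_zero_iff, boolMat_apply_ne_zero_iff]

end MonomialMap

theorem IsFixedPointSystem.apply_iterate_eq_of_semiconj {X Y : Type*} {f : X → X} {g : Y → Y}
    {φ : X → Y} (hg : IsFixedPointSystem g) (hφ : Function.Semiconj φ f g) {x : X} {t : ℕ}
    (ht : 0 < t) (hx : f^[t] x = x) (i : ℕ) : φ (f^[i] x) = φ x := by
  have hfix : g (φ x) = φ x := hg (φ x) ⟨t, ht, by rw [← (hφ.iterate_right t) x, hx]⟩
  rw [(hφ.iterate_right i) x, Function.iterate_fixed hfix]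

theorem stmt2_general {F : Type*} [Field F] [DecidableEq F] {n : ℕ}
    (A : Matrix (Fin n) (Fin n) ℕ)
    (hT : IsFixedPointSystem (monomialMap (K := ZMod 2) (boolMat A)))
    (u : Fin n → F) (t : ℕ) (ht : 1 ≤ t) (hu : (monomialMap A)^[t] u = u) :
    ∀ i : ℕ, supp ((monomialMap A)^[i] u) = supp u :=
  hT.apply_iterate_eq_of_semiconj (supp_monomialMap A) ht hu

theorem stmt2 {F : Type*} [Field F] [Fintype F] [DecidableEq F] {n : ℕ}
    (A : Matrix (Fin n) (Fin n) ℕ)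
    (hT : IsFixedPointSystem (monomialMap (K := ZMod 2) (boolMat A)))
    (u : Fin n → F) (t : ℕ) (ht : 1 ≤ t) (hu : (monomialMap A)^[t] u = u) :
    ∀ i : ℕ, supp ((monomialMap A)^[i] u) = supp u :=
  stmt2_general A hT u t ht hu
end

section
/- Every state in {0,1}^n ⊆ F_q^n equal to its own support is mapped by a monomial system f to the same value as its Booleanization T(f) maps it (under the identification {0,1} with F_2); consequently the phase space of T(f) embeds as a subgraph of the phase space of f. -/
/-- The identification of `F_2` with the subset `{0,1}` of `F`. -/
def emb (F : Type*) [Field F] [DecidableEq F] : ZMod 2 → F :=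
  fun a => if a = 0 then 0 else 1

/-!
The embedding `{0,1} ⊆ F` is multiplicative (though not additive unless `char F = 2`), so it
commutes with any monomial map. On idempotent states, such as those of `F_2^n`, a positive
exponent acts like exponent `1`, so `f` and `T(f)` agree on `F_2^n`.
-/

theorem monomialMap_comp_monoidHom {K L : Type*} [CommRing K] [CommRing L] {n : ℕ}
    (φ : K →* L) (A : Matrix (Fin n) (Fin n) ℕ) (x : Fin n → K) :
    monomialMap A (φ ∘ x) = φ ∘ monomialMap A x := by
  funext i
  simp only [monomialMap, Function.comp_apply, map_prod, map_pow]

theorem monomialMap_boolMat_of_isIdempotentElem {K : Type*} [CommRing K] {n : ℕ}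
    (A : Matrix (Fin n) (Fin n) ℕ) {x : Fin n → K} (hx : ∀ j, IsIdempotentElem (x j)) :
    monomialMap (boolMat A) x = monomialMap A x := by
  funext i
  refine Finset.prod_congr rfl fun j _ => ?_
  by_cases h : A i j = 0
  · simp [boolMat, h]
  · simp [boolMat, Nat.pos_of_ne_zero h, (hx j).pow_eq h]

theorem ZMod.eq_zero_or_eq_one_of_two : ∀ a : ZMod 2, a = 0 ∨ a = 1 := by
  decide

theorem ZMod.isIdempotentElem_of_two (a : ZMod 2) : IsIdempotentElem a := by
  rcases ZMod.eq_zero_or_eq_one_of_two a with rfl | rfl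
  exacts [.zero, .one]

section emb

variable (F : Type*) [Field F] [DecidableEq F]

theorem emb_injective : Function.Injective (emb F) := by
  intro a b hab
  rcases ZMod.eq_zero_or_eq_one_of_two a with rfl | rfl <;>
    rcases ZMod.eq_zero_or_eq_one_of_two b with rfl | rfl <;> simp_all [emb]

def embMonoidHom : ZMod 2 →* F where
  toFun := emb F
  map_one' := by simp [emb]
  map_mul' a b := by
    rcases ZMod.eq_zero_or_eq_one_of_two a with rfl | rfl <;> simp [emb]

end emb

theorem stmt3_general {F : Type*} [Field F] [DecidableEq F] {n : ℕ}
    (A : Matrix (Fin n) (Fin n) ℕ) :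
    (∀ v : Fin n → ZMod 2,
      monomialMap A (fun i => emb F (v i)) =
        fun i => emb F (monomialMap (K := ZMod 2) (boolMat A) v i)) ∧
    Function.Injective (fun (v : Fin n → ZMod 2) => fun i => emb F (v i)) := by
  refine ⟨fun v => ?_, (emb_injective F).comp_left⟩
  rw [monomialMap_boolMat_of_isIdempotentElem A fun j => ZMod.isIdempotentElem_of_two (v j)]
  exact monomialMap_comp_monoidHom (embMonoidHom F) A v

theorem stmt3 {F : Type*} [Field F] [Fintype F] [DecidableEq F] {n : ℕ}
    (A : Matrix (Fin n) (Fin n) ℕ) :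
    (∀ v : Fin n → ZMod 2,
      monomialMap A (fun i => emb F (v i)) =
        fun i => emb F (monomialMap (K := ZMod 2) (boolMat A) v i)) ∧
    Function.Injective (fun (v : Fin n → ZMod 2) => fun i => emb F (v i)) :=
  stmt3_general A
end

section
/- A monomial dynamical system f: F_q^n → F_q^n is a fixed point system if and only if both its Booleanization T(f): F_2^n → F_2^n and its associated linear system L(f) = A: (Z/(q-1))^n → (Z/(q-1))^n are fixed point systems. -/
/-!
For a generator `g` of `Fˣ`, the maps `b ↦ b` (reading `0, 1 ∈ 𝔽₂` in `F`) and `v ↦ (g ^ v j)ⱼ`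
are injective semiconjugacies from `T(f)` and `L(f)` into `f`, and a subsystem of a fixed point
system is one.

Conversely, let `x` be periodic for `f`. Its zero pattern is periodic, hence fixed, under `T(f)`,
so `f x` and `x` have the same support `S`; then `v ↦ (if j ∈ S then g ^ v j else 0)ⱼ` is a
(non-injective) semiconjugacy from `L(f)` to `f` hitting `x`. Every orbit of the finite fixed point
system `L(f)` ends in a fixed point, hence so does the orbit of `x`, and a periodic point whose
orbit reaches a fixed point is itself fixed.
-/

open Function Multiplicative

section Dynamics

variable {X Y : Type*} {g : X → X} {f : Y → Y}

theorem Function.exists_iterate_mem_periodicPts [Finite X] (g : X → X) (x : X) :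
    ∃ N, g^[N] x ∈ periodicPts g := by
  obtain ⟨a, b, hab, heq⟩ := Finite.exists_ne_map_eq_of_infinite (g^[·] x)
  wlog hlt : a < b generalizing a b
  · exact this b a hab.symm heq.symm (by omega)
  refine ⟨a, mk_mem_periodicPts (n := b - a) (by omega) ?_⟩
  change g^[b - a] (g^[a] x) = g^[a] x
  rw [← iterate_add_apply, Nat.sub_add_cancel hlt.le]
  exact heq.symm

theorem Function.isFixedPt_of_mem_periodicPts_of_isFixedPt_iterate {x : X}
    (hx : x ∈ periodicPts g) {N : ℕ} (hN : IsFixedPt g (g^[N] x)) : IsFixedPt g x := by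
  obtain ⟨t, ht, hper⟩ := mem_periodicPts.mp hx
  have hx' : g^[N * t] x = x := (hper.const_mul N).eq
  have hle : N ≤ N * t := Nat.le_mul_of_pos_right N ht
  rw [← hx', ← Nat.sub_add_cancel hle, iterate_add_apply, (hN.iterate _).eq]
  exact hN

namespace IsFixedPointSystem

theorem of_semiconj_injective (hf : IsFixedPointSystem f) {h : X → Y} (hinj : Injective h)
    (hsc : Semiconj h g f) : IsFixedPointSystem g := fun x hx =>
  hinj <| by rw [hsc]; exact hf (h x) (hsc.mapsTo_periodicPts hx)

theorem isFixedPt_of_semiconj [Finite X] (hg : IsFixedPointSystem g) {h : X → Y}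
    (hsc : Semiconj h g f) {x : X} (hx : h x ∈ periodicPts f) : IsFixedPt f (h x) := by
  obtain ⟨N, hN⟩ := exists_iterate_mem_periodicPts g x
  refine isFixedPt_of_mem_periodicPts_of_isFixedPt_iterate hx (N := N) ?_
  rw [← (hsc.iterate_right N) x]
  exact IsFixedPt.map (hg _ hN) hsc

end IsFixedPointSystem

end Dynamics

section Monomial

variable {K K' : Type*} [CommRing K] [CommRing K'] {n : ℕ} (A : Matrix (Fin n) (Fin n) ℕ)

theorem semiconj_monomialMap_monoidHom (φ : K →* K') :
    Semiconj (fun x => φ ∘ x) (monomialMap A) (monomialMap A) := fun x => by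
  funext i
  simp [monomialMap, map_prod, map_pow]

theorem semiconj_monomialMap_ofAdd {R : Type*} [CommSemiring R] (φ : Multiplicative R →* K) :
    Semiconj (fun v j => φ (ofAdd (v j))) (A.map (Nat.cast : ℕ → R)).mulVec
      (monomialMap A) := fun v => by
  funext i
  simp only [monomialMap, Matrix.mulVec, dotProduct, Matrix.map_apply, ← nsmul_eq_mul,
    ofAdd_sum, ofAdd_nsmul, map_prod, map_pow]

theorem monomialMap_boolMat_zmod_two : monomialMap (K := ZMod 2) (boolMat A) = monomialMap A := by
  have hpow : ∀ (b : ZMod 2) (k : ℕ), b ^ (if 0 < k then 1 else 0) = b ^ k := by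
    intro b k
    rcases Nat.eq_zero_or_pos k with rfl | hk
    · simp
    · have hb : IsIdempotentElem b := by fin_cases b <;> rfl
      rw [if_pos hk, pow_one, hb.pow_eq hk.ne']
  funext x i
  exact Finset.prod_congr rfl fun j _ => hpow (x j) (A i j)

variable [NoZeroDivisors K]

theorem monomialMap_eq_zero_iff [Nontrivial K] {x : Fin n → K} {i : Fin n} :
    monomialMap A x i = 0 ↔ ∃ j, A i j ≠ 0 ∧ x j = 0 := by
  simp [monomialMap, Finset.prod_eq_zero_iff, and_comm]


theorem monomialMap_ite_of_support [Nontrivial K] [DecidableEq K] {x : Fin n → K}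
    (hx : ∀ i, monomialMap A x i = 0 ↔ x i = 0) (y : Fin n → K) :
    monomialMap A (fun j => if x j = 0 then 0 else y j) =
      fun i => if x i = 0 then 0 else monomialMap A y i := by
  funext i
  by_cases hi : x i = 0
  · obtain ⟨j, hAj, hxj⟩ := (monomialMap_eq_zero_iff A).mp ((hx i).mpr hi)
    rw [if_pos hi]
    exact (monomialMap_eq_zero_iff A).mpr ⟨j, hAj, if_pos hxj⟩
  · rw [if_neg hi]
    refine Finset.prod_congr rfl fun j _ => ?_
    by_cases hAj : A i j = 0
    · simp [hAj]
    · have hxj : x j ≠ 0 := fun hxj =>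
        hi ((hx i).mp ((monomialMap_eq_zero_iff A).mpr ⟨j, hAj, hxj⟩))
      simp only [if_neg hxj]

end Monomial

section ZeroOne

theorem ZMod.eq_zero_or_eq_one_of_two_s5 (b : ZMod 2) : b = 0 ∨ b = 1 := by
  fin_cases b
  exacts [Or.inl rfl, Or.inr rfl]

variable (M : Type*) [MonoidWithZero M]

def zeroOneEmbedding : ZMod 2 →* M where
  toFun b := if b = 0 then 0 else 1
  map_one' := if_neg (by decide)
  map_mul' a b := by
    rcases a.eq_zero_or_eq_one_of_two_s5 with rfl | rfl <;>
      rcases b.eq_zero_or_eq_one_of_two_s5 with rfl | rfl <;> simp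

theorem zeroOneEmbedding_injective [Nontrivial M] : Injective (zeroOneEmbedding M) := by
  intro a b h
  rcases a.eq_zero_or_eq_one_of_two_s5 with rfl | rfl <;>
    rcases b.eq_zero_or_eq_one_of_two_s5 with rfl | rfl <;> simp_all [zeroOneEmbedding]

variable [NoZeroDivisors M] [Nontrivial M] [DecidableEq M]

def supportIndicator : M →* ZMod 2 where
  toFun a := if a = 0 then 0 else 1
  map_one' := if_neg one_ne_zero
  map_mul' a b := by by_cases ha : a = 0 <;> by_cases hb : b = 0 <;> simp [ha, hb]

variable {M}

theorem supportIndicator_eq_iff {a b : M} :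
    supportIndicator M a = supportIndicator M b ↔ (a = 0 ↔ b = 0) := by
  by_cases ha : a = 0 <;> by_cases hb : b = 0 <;> simp [supportIndicator, ha, hb]

end ZeroOne

section FixedPointSystem

variable {K R : Type*} [CommRing K] [CommSemiring R] {n : ℕ}
  (A : Matrix (Fin n) (Fin n) ℕ)

theorem IsFixedPointSystem.boolMat [Nontrivial K] (hf : IsFixedPointSystem (monomialMap (K := K) A)) :
    IsFixedPointSystem (monomialMap (K := ZMod 2) (boolMat A)) := by
  rw [monomialMap_boolMat_zmod_two]
  exact hf.of_semiconj_injective (zeroOneEmbedding_injective K).comp_left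
    (semiconj_monomialMap_monoidHom A _)

theorem IsFixedPointSystem.mulVec (hf : IsFixedPointSystem (monomialMap (K := K) A))
    {φ : Multiplicative R →* K} (hφ : Injective φ) :
    IsFixedPointSystem (A.map (Nat.cast : ℕ → R)).mulVec :=
  hf.of_semiconj_injective (hφ.comp ofAdd.injective).comp_left (semiconj_monomialMap_ofAdd A φ)

theorem isFixedPointSystem_monomialMap [IsDomain K] [Finite R] {φ : Multiplicative R →* K}
    (hφ : ∀ a : K, a ≠ 0 → ∃ r, φ (ofAdd r) = a)
    (hT : IsFixedPointSystem (monomialMap (K := ZMod 2) (boolMat A)))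
    (hL : IsFixedPointSystem (A.map (Nat.cast : ℕ → R)).mulVec) :
    IsFixedPointSystem (monomialMap (K := K) A) := by
  classical
  intro x hx
  have hsupp : ∀ i, monomialMap A x i = 0 ↔ x i = 0 := by
    rw [monomialMap_boolMat_zmod_two] at hT
    have hσ := semiconj_monomialMap_monoidHom A (supportIndicator K)
    have hfix := hT _ (hσ.mapsTo_periodicPts hx)
    rw [← hσ] at hfix
    exact fun i => supportIndicator_eq_iff.mp (congrFun hfix i)
  let Ψ : (Fin n → R) → Fin n → K := fun v j => if x j = 0 then 0 else φ (ofAdd (v j))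
  have hΨ : Semiconj Ψ (A.map (Nat.cast : ℕ → R)).mulVec (monomialMap A) := fun v => by
    simp only [Ψ, monomialMap_ite_of_support A hsupp, ← semiconj_monomialMap_ofAdd A φ v]
  have hxΨ : Ψ (fun j => invFun (fun r => φ (ofAdd r)) (x j)) = x := by
    funext j
    by_cases hj : x j = 0
    · simp [Ψ, hj]
    · simp only [Ψ, if_neg hj]
      exact invFun_eq (hφ _ hj)
  rw [← hxΨ] at hx ⊢
  exact hL.isFixedPt_of_semiconj hΨ hx

end FixedPointSystem

theorem stmt5 {F : Type*} [Field F] [Fintype F] {n : ℕ}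
    (A : Matrix (Fin n) (Fin n) ℕ) :
    IsFixedPointSystem (monomialMap (K := F) A) ↔
      IsFixedPointSystem (monomialMap (K := ZMod 2) (boolMat A)) ∧
      IsFixedPointSystem (fun s : Fin n → ZMod (Fintype.card F - 1) =>
        (A.map (Nat.cast : ℕ → ZMod (Fintype.card F - 1))).mulVec s) := by
  classical
  have hcard : Nat.card Fˣ = Fintype.card F - 1 := by
    rw [Nat.card_eq_fintype_card, Fintype.card_units]
  have : NeZero (Fintype.card F - 1) := ⟨by have := Fintype.one_lt_card (α := F); omega⟩
  obtain ⟨e⟩ : Nonempty (Multiplicative (ZMod (Fintype.card F - 1)) ≃* Fˣ) :=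
    hcard ▸ ⟨zmodCyclicMulEquiv inferInstance⟩
  let φ := (Units.coeHom F).comp e.toMonoidHom
  have hφinj : Injective φ := Units.val_injective.comp e.injective
  have hφsurj : ∀ a : F, a ≠ 0 → ∃ r, φ (ofAdd r) = a := fun a ha =>
    ⟨toAdd (e.symm (Units.mk0 a ha)), by simp [φ]⟩
  exact ⟨fun hf => ⟨hf.boolMat A, hf.mulVec A hφinj⟩,
    fun ⟨hT, hL⟩ => isFixedPointSystem_monomialMap A hφsurj hT hL⟩
end

section
/- If T(f) and L(f) are fixed point systems and x is a periodic point of the monomial system f with all coordinates nonzero, then x is a fixed point of f. -/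
/-!
Pick a generator `γ` of the cyclic group `Fˣ`, of order `c = q - 1`. Every vector with nonzero
coordinates is `γ ^ s` for an exponent vector `s ∈ (ℤ/c)ⁿ`, and `s ↦ γ ^ s` is injective and
carries the linear map `L(f) = A` on exponents to the monomial map `f`. A periodic point `γ ^ s`
of `f` therefore comes from a periodic point `s` of `L(f)`, which is fixed, so `γ ^ s` is fixed.
-/

open Function

theorem IsFixedPointSystem.apply_eq_of_semiconj {X Y : Type*} {f : X → X} {g : Y → Y}
    {φ : Y → X} (hg : IsFixedPointSystem g) (hφ : Injective φ) (h : Semiconj φ g f) {y : Y}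
    (hy : ∃ t, 0 < t ∧ f^[t] (φ y) = φ y) : f (φ y) = φ y := by
  obtain ⟨t, ht, hper⟩ := hy
  have hgy : g^[t] y = y := hφ <| by rw [(h.iterate_right t).eq, hper]
  rw [← h.eq, hg y ⟨t, ht, hgy⟩]

def powVec {M : Type*} [Monoid M] {c n : ℕ} (γ : M) (s : Fin n → ZMod c) : Fin n → M :=
  fun i => γ ^ (s i).val

section PowVec

variable {M : Type*} [Monoid M] {c n : ℕ} {γ : M}

theorem powVec_injective [NeZero c] (hγ : orderOf γ = c) :
    Injective (powVec (n := n) γ : (Fin n → ZMod c) → Fin n → M) := by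
  intro s t hst
  funext i
  have hlt : ∀ a : ZMod c, a.val ∈ Set.Iio (orderOf γ) := fun a => hγ ▸ ZMod.val_lt a
  exact ZMod.val_injective c (pow_injOn_Iio_orderOf (hlt _) (hlt _) (congrFun hst i))

theorem pow_val_natCast (hγ : orderOf γ = c) (k : ℕ) : γ ^ (k : ZMod c).val = γ ^ k := by
  rw [ZMod.val_natCast, ← hγ, pow_mod_orderOf]

theorem powVec_natCast (hγ : orderOf γ = c) (k : Fin n → ℕ) :
    powVec γ (fun i => (k i : ZMod c)) = fun i => γ ^ k i :=
  funext fun i => pow_val_natCast hγ (k i)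

end PowVec

theorem monomialMap_semiconj_powVec {K : Type*} [CommRing K] {c n : ℕ} [NeZero c]
    (A : Matrix (Fin n) (Fin n) ℕ) {γ : K} (hγ : orderOf γ = c) :
    Semiconj (powVec γ) (A.map (Nat.cast : ℕ → ZMod c)).mulVec (monomialMap A) := by
  intro s
  funext i
  have hexp : ((A.map (Nat.cast : ℕ → ZMod c)).mulVec s) i
      = ((∑ j, A i j * (s j).val : ℕ) : ZMod c) := by
    simp [Matrix.mulVec, dotProduct, ZMod.natCast_val]
  rw [powVec, hexp, pow_val_natCast hγ, monomialMap, ← Finset.prod_pow_eq_pow_sum]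
  exact Finset.prod_congr rfl fun j _ => by rw [powVec, ← pow_mul, mul_comm]

theorem FiniteField.exists_orderOf_eq_card_sub_one_forall_pow (F : Type*) [Field F] [Fintype F] :
    ∃ γ : F, orderOf γ = Fintype.card F - 1 ∧ ∀ a : F, a ≠ 0 → ∃ k : ℕ, γ ^ k = a := by
  classical
  obtain ⟨g, hg⟩ := IsCyclic.exists_generator (α := Fˣ)
  refine ⟨g, ?_, fun a ha => ?_⟩
  · rw [orderOf_units, orderOf_eq_card_of_forall_mem_zpowers hg, Nat.card_eq_fintype_card,
      Fintype.card_units]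
  · obtain ⟨k, hk⟩ := mem_powers_iff_mem_zpowers.2 (hg (Units.mk0 a ha))
    exact ⟨k, by simpa using congrArg Units.val hk⟩

theorem stmt6_general {F : Type*} [Field F] [Fintype F] {n : ℕ}
    (A : Matrix (Fin n) (Fin n) ℕ)
    (hL : IsFixedPointSystem (fun s : Fin n → ZMod (Fintype.card F - 1) =>
      (A.map (Nat.cast : ℕ → ZMod (Fintype.card F - 1))).mulVec s))
    (x : Fin n → F) (hx : ∀ i, x i ≠ 0)
    (hper : ∃ t, 0 < t ∧ (monomialMap A)^[t] x = x) :
    monomialMap A x = x := by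
  have : NeZero (Fintype.card F - 1) := ⟨(Nat.sub_pos_of_lt Fintype.one_lt_card).ne'⟩
  obtain ⟨γ, hγ, hsurj⟩ := FiniteField.exists_orderOf_eq_card_sub_one_forall_pow F
  choose k hk using fun i => hsurj (x i) (hx i)
  have hxγ : powVec γ (fun i => (k i : ZMod (Fintype.card F - 1))) = x := by
    rw [powVec_natCast hγ]
    exact funext hk
  rw [← hxγ] at hper ⊢
  exact hL.apply_eq_of_semiconj (powVec_injective hγ) (monomialMap_semiconj_powVec A hγ) hper

theorem stmt6 {F : Type*} [Field F] [Fintype F] {n : ℕ}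
    (A : Matrix (Fin n) (Fin n) ℕ)
    (hT : IsFixedPointSystem (monomialMap (K := ZMod 2) (boolMat A)))
    (hL : IsFixedPointSystem (fun s : Fin n → ZMod (Fintype.card F - 1) =>
      (A.map (Nat.cast : ℕ → ZMod (Fintype.card F - 1))).mulVec s))
    (x : Fin n → F) (hx : ∀ i, x i ≠ 0)
    (hper : ∃ t, 0 < t ∧ (monomialMap A)^[t] x = x) :
    monomialMap A x = x :=
  stmt6_general A hL x hx hper
end

section
/- Let m = st with gcd(s,t) = 1, and let f: (Z/m)^n → (Z/m)^n be a linear map with induced linear maps g over Z/s and h over Z/t via the CRT isomorphism Z/m ≅ Z/s × Z/t. Then f is a fixed point system if and only if both g and h are fixed point systems. -/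
/-- Fixed point systems transfer along a conjugating equivalence. -/
lemma isFixedPointSystem_of_conj {X Y : Type*} (E : X ≃ Y) (f : X → X) (F : Y → Y)
    (hE : ∀ x, E (f x) = F (E x)) (hF : IsFixedPointSystem F) : IsFixedPointSystem f := by
  have hsc : Function.Semiconj E f F := hE
  intro x ⟨k, hk, hx⟩
  have h1 : F^[k] (E x) = E x := by
    rw [← (hsc.iterate_right k) x, hx]
  have h2 : F (E x) = E x := hF (E x) ⟨k, hk, h1⟩
  have := (hE x).trans h2
  exact E.injective this

/-- Product of systems is a fixed point system iff each factor is, given each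
factor has a fixed point. -/
lemma isFixedPointSystem_prodMap {A B : Type*} (g : A → A) (h : B → B)
    (a0 : A) (b0 : B) (ha0 : g a0 = a0) (hb0 : h b0 = b0) :
    IsFixedPointSystem (Prod.map g h) ↔ IsFixedPointSystem g ∧ IsFixedPointSystem h := by
  constructor
  · intro H
    constructor
    · intro x ⟨k, hk, hx⟩
      have hper : (Prod.map g h)^[k] (x, b0) = (x, b0) := by
        rw [Prod.map_iterate]
        simp [hx, Function.iterate_fixed hb0]
      have := H (x, b0) ⟨k, hk, hper⟩
      exact congrArg Prod.fst this
    · intro y ⟨k, hk, hy⟩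
      have hper : (Prod.map g h)^[k] (a0, y) = (a0, y) := by
        rw [Prod.map_iterate]
        simp [hy, Function.iterate_fixed ha0]
      have := H (a0, y) ⟨k, hk, hper⟩
      exact congrArg Prod.snd this
  · rintro ⟨Hg, Hh⟩ ⟨x, y⟩ ⟨k, hk, hxy⟩
    rw [Prod.map_iterate] at hxy
    have hx : g^[k] x = x := congrArg Prod.fst hxy
    have hy : h^[k] y = y := congrArg Prod.snd hxy
    exact Prod.ext (Hg x ⟨k, hk, hx⟩) (Hh y ⟨k, hk, hy⟩)

theorem stmt8 {n s t : ℕ} (hco : Nat.Coprime s t)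
    (A : Matrix (Fin n) (Fin n) (ZMod (s * t))) :
    IsFixedPointSystem (fun x : Fin n → ZMod (s * t) => A.mulVec x) ↔
      IsFixedPointSystem (fun x : Fin n → ZMod s =>
        (A.map (ZMod.castHom (Dvd.intro t rfl) (ZMod s))).mulVec x) ∧
      IsFixedPointSystem (fun x : Fin n → ZMod t =>
        (A.map (ZMod.castHom (Dvd.intro_left s rfl) (ZMod t))).mulVec x) := by
  set e := ZMod.chineseRemainder hco with he
  have he1 : ∀ x : ZMod (s * t), (e x).1 = ZMod.castHom (Dvd.intro t rfl) (ZMod s) x := by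
    intro x
    simp only [he, ZMod.chineseRemainder, RingEquiv.coe_mk, Equiv.coe_fn_mk,
      ZMod.castHom_apply]
    exact Prod.fst_zmod_cast x
  have he2 : ∀ x : ZMod (s * t), (e x).2 = ZMod.castHom (Dvd.intro_left s rfl) (ZMod t) x := by
    intro x
    simp only [he, ZMod.chineseRemainder, RingEquiv.coe_mk, Equiv.coe_fn_mk,
      ZMod.castHom_apply]
    exact Prod.snd_zmod_cast x
  set g := fun x : Fin n → ZMod s =>
      (A.map (ZMod.castHom (Dvd.intro t rfl) (ZMod s))).mulVec x with hg
  set h := fun x : Fin n → ZMod t =>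
      (A.map (ZMod.castHom (Dvd.intro_left s rfl) (ZMod t))).mulVec x with hh
  -- the equivalence on vectors
  set E : (Fin n → ZMod (s * t)) ≃ (Fin n → ZMod s) × (Fin n → ZMod t) :=
    (Equiv.arrowCongr (Equiv.refl (Fin n)) e.toEquiv).trans
      (Equiv.arrowProdEquivProdArrow _ _ _) with hE
  have hEapp : ∀ x : Fin n → ZMod (s * t),
      E x = (fun i => (e (x i)).1, fun i => (e (x i)).2) := by
    intro x; rfl
  have hconj : ∀ x, E (A.mulVec x) = Prod.map g h (E x) := by
    intro x
    rw [hEapp, hEapp]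
    refine Prod.ext ?_ ?_
    · funext i
      simp only [Prod.map_fst, hg, he1]
      exact RingHom.map_mulVec _ A x i
    · funext i
      simp only [Prod.map_snd, hh, he2]
      exact RingHom.map_mulVec _ A x i
  have hconj' : ∀ y, E.symm (Prod.map g h y) = A.mulVec (E.symm y) := by
    intro y
    apply E.injective
    rw [E.apply_symm_apply, hconj, E.apply_symm_apply]
  have hprod := isFixedPointSystem_prodMap g h 0 0 (by simp [hg]) (by simp [hh])
  rw [← hprod]
  constructor
  · intro hf
    exact isFixedPointSystem_of_conj E.symm (Prod.map g h)
      (fun x : Fin n → ZMod (s * t) => A.mulVec x) (by intro y; exact hconj' y) hf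
  · intro hgh
    exact isFixedPointSystem_of_conj E (fun x : Fin n → ZMod (s * t) => A.mulVec x)
      (Prod.map g h) hconj hgh
end

section
/- If the mod-p reduction g of a linear map f: (Z/p^r)^n → (Z/p^r)^n is not a fixed point system, then f is not a fixed point system. -/
theorem stmt12 {p r n : ℕ} (hp : p.Prime) (hr : 1 ≤ r)
    (A : Matrix (Fin n) (Fin n) (ZMod (p ^ r)))
    (hg : ¬ IsFixedPointSystem (fun x : Fin n → ZMod p =>
      (A.map (ZMod.castHom (dvd_pow_self p (Nat.one_le_iff_ne_zero.mp hr)) (ZMod p))).mulVec x)) :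
    ¬ IsFixedPointSystem (fun x : Fin n → ZMod (p ^ r) => A.mulVec x) := by
  intro hf
  apply hg
  set φ := ZMod.castHom (dvd_pow_self p (Nat.one_le_iff_ne_zero.mp hr)) (ZMod p)
  set f : (Fin n → ZMod (p ^ r)) → (Fin n → ZMod (p ^ r)) := fun x => A.mulVec x
  set g : (Fin n → ZMod p) → (Fin n → ZMod p) := fun x => (A.map φ).mulVec x
  set π : (Fin n → ZMod (p ^ r)) → (Fin n → ZMod p) := fun y i => φ (y i) with hπ
  have hsemi : ∀ y, π (f y) = g (π y) := by
    intro y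
    funext i
    exact RingHom.map_mulVec φ A y i
  have hiter : ∀ k y, π (f^[k] y) = g^[k] (π y) := by
    intro k
    induction k with
    | zero => intro y; simp
    | succ k ih =>
      intro y
      rw [Function.iterate_succ_apply, Function.iterate_succ_apply, ih, hsemi]
  intro x ⟨t, ht, hxt⟩
  have : NeZero (p ^ r) := ⟨pow_ne_zero r hp.ne_zero⟩
  have : NeZero p := ⟨hp.ne_zero⟩
  -- lift x
  obtain ⟨y, hy⟩ : ∃ y, π y = x := by
    refine ⟨fun i => (ZMod.cast (x i) : ZMod (p ^ r)), ?_⟩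
    funext i
    simp only [hπ, φ, ZMod.castHom_apply]
    exact ZMod.cast_cast_zmod_of_le (Nat.le_self_pow (Nat.one_le_iff_ne_zero.mp hr) p) (x i)
  -- find a periodic point among iterates f^[k*t] y
  obtain ⟨a, b, hab, heq⟩ :
      ∃ a b : ℕ, a ≠ b ∧ f^[a * t] y = f^[b * t] y := by
    obtain ⟨a, b, hab, heq⟩ := Finite.exists_ne_map_eq_of_infinite (fun k : ℕ => f^[k * t] y)
    exact ⟨a, b, hab, heq⟩
  wlog hlt : a < b generalizing a b
  · exact this b a hab.symm heq.symm (hab.lt_or_gt.resolve_left hlt)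
  set z := f^[a * t] y with hz
  have hper : f^[(b - a) * t] z = z := by
    rw [hz, ← Function.iterate_add_apply, ← Nat.add_mul, Nat.sub_add_cancel hlt.le, ← heq]
  have hfz : f z = z :=
    hf z ⟨(b - a) * t, Nat.mul_pos (Nat.sub_pos_of_lt hlt) ht, hper⟩
  -- π z = x
  have hπz : π z = x := by
    rw [hz, hiter, hy]
    have : ∀ k, g^[k * t] x = x := by
      intro k
      induction k with
      | zero => simp
      | succ k ih => rw [Nat.succ_mul, Function.iterate_add_apply, hxt, ih]
    exact this a
  calc g x = g (π z) := by rw [hπz]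
    _ = π (f z) := (hsemi z).symm
    _ = π z := by rw [hfz]
    _ = x := hπz
end

section
/- If a monomial system f: F_q^n → F_q^n is a fixed point system, then the linear map L(f) = A: (Z/(q-1))^n → (Z/(q-1))^n given by its exponent matrix is a fixed point system. -/
theorem stmt14 {F : Type*} [Field F] [Fintype F] {n : ℕ}
    (A : Matrix (Fin n) (Fin n) ℕ)
    (hf : IsFixedPointSystem (monomialMap (K := F) A)) :
    IsFixedPointSystem (fun s : Fin n → ZMod (Fintype.card F - 1) =>
      (A.map (Nat.cast : ℕ → ZMod (Fintype.card F - 1))).mulVec s) := by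
  set m := Fintype.card F - 1 with hm
  haveI : DecidableEq F := Classical.decEq F
  haveI : NeZero m := ⟨by have := Fintype.one_lt_card (α := F); omega⟩
  obtain ⟨α, hα⟩ := IsCyclic.exists_generator (α := Fˣ)
  have hord : orderOf α = m := by
    rw [orderOf_eq_card_of_forall_mem_zpowers hα, hm, Nat.card_eq_fintype_card, Fintype.card_units]
  set g : (Fin n → ZMod m) → (Fin n → ZMod m) :=
    fun s => (A.map (Nat.cast : ℕ → ZMod m)).mulVec s with hg
  set φ : (Fin n → ZMod m) → (Fin n → F) := fun s i => (α : F) ^ (s i).val with hφ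
  have hpow : ∀ (N M : ℕ), (N : ZMod m) = (M : ZMod m) → (α : F) ^ N = (α : F) ^ M := by
    intro N M h
    have : α ^ N = α ^ M := by
      rw [pow_eq_pow_iff_modEq, hord]
      exact (ZMod.natCast_eq_natCast_iff _ _ _).mp h
    exact_mod_cast congrArg (Units.val) this
  have hinj : ∀ (a b : ZMod m), (α : F) ^ a.val = (α : F) ^ b.val → a = b := by
    intro a b h
    have h' : α ^ a.val = α ^ b.val := Units.ext h
    rw [pow_eq_pow_iff_modEq, hord] at h'
    have := (ZMod.natCast_eq_natCast_iff _ _ _).mpr h'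
    simpa [ZMod.natCast_val, ZMod.cast_id] using this
  have key : ∀ s, monomialMap A (φ s) = φ (g s) := by
    intro s
    funext i
    simp only [monomialMap, hφ]
    calc ∏ j, ((α : F) ^ (s j).val) ^ A i j
        = ∏ j, (α : F) ^ ((s j).val * A i j) := by
          refine Finset.prod_congr rfl fun j _ => ?_; rw [pow_mul]
      _ = (α : F) ^ (∑ j, (s j).val * A i j) := by
          rw [← Finset.prod_pow_eq_pow_sum]
      _ = (α : F) ^ (g s i).val := by
          apply hpow
          push_cast
          simp only [ZMod.natCast_val, ZMod.cast_id]
          rw [hg]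
          simp [Matrix.mulVec, dotProduct, ZMod.natCast_val, ZMod.cast_id,
            mul_comm]
  have hiter : ∀ (k : ℕ) (s), (monomialMap A)^[k] (φ s) = φ (g^[k] s) := by
    intro k
    induction k with
    | zero => intro s; simp
    | succ k ih =>
      intro s
      rw [Function.iterate_succ_apply', Function.iterate_succ_apply', ih, key]
  intro s ⟨t, ht, hts⟩
  have hper : (monomialMap A)^[t] (φ s) = φ s := by
    rw [hiter]
    exact congrArg φ hts
  have hfix := hf (φ s) ⟨t, ht, hper⟩
  rw [key] at hfix
  funext i
  exact hinj _ _ (congrFun hfix i)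
end

section
/- For a monomial system f on F_q^n with exponent matrix A, the length of any limit cycle of f all of whose states have all coordinates nonzero equals the length of a limit cycle of the linear map A on (Z/(q-1))^n; in particular, if A: (Z/(q-1))^n → (Z/(q-1))^n has a periodic point of period t > 1, then f has a periodic point of period t. -/
section aux

variable {M : Type*} [CommMonoid M] {m : ℕ} {c : M}

/-- the exponential map `ZMod m → M`, `a ↦ c ^ a.val`. -/
private def psi (m : ℕ) (c : M) : ZMod m → M := fun a => c ^ a.val

private lemma psi_add [NeZero m] (hc : ∀ a b : ℕ, a % m = b % m → c ^ a = c ^ b)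
    (x y : ZMod m) : psi m c (x + y) = psi m c x * psi m c y := by
  unfold psi
  rw [← pow_add]
  apply hc
  rw [ZMod.val_add]
  exact Nat.mod_mod_of_dvd _ dvd_rfl

private lemma psi_zero [NeZero m] (hc : ∀ a b : ℕ, a % m = b % m → c ^ a = c ^ b) :
    psi m c 0 = 1 := by
  unfold psi
  simp [ZMod.val_zero]

private lemma psi_nsmul [NeZero m] (hc : ∀ a b : ℕ, a % m = b % m → c ^ a = c ^ b)
    (k : ℕ) (x : ZMod m) : psi m c (k • x) = psi m c x ^ k := by
  induction k with
  | zero => simpa using psi_zero hc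
  | succ k ih => rw [succ_nsmul, psi_add hc, ih, pow_succ]

private lemma psi_sum [NeZero m] (hc : ∀ a b : ℕ, a % m = b % m → c ^ a = c ^ b)
    {ι : Type*} (s : Finset ι) (f : ι → ZMod m) :
    psi m c (∑ j ∈ s, f j) = ∏ j ∈ s, psi m c (f j) := by
  classical
  induction s using Finset.cons_induction with
  | empty => simpa using psi_zero hc
  | cons a s ha ih => rw [Finset.sum_cons, Finset.prod_cons, psi_add hc, ih]

end aux

section conj

variable {F : Type*} [Field F] {m : ℕ} {c : F}

private lemma conj_step [NeZero m] (hc : ∀ a b : ℕ, a % m = b % m → c ^ a = c ^ b)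
    {n : ℕ} (A : Matrix (Fin n) (Fin n) ℕ) (s : Fin n → ZMod m) :
    monomialMap A (fun j => psi m c (s j)) =
      fun i => psi m c ((A.map (Nat.cast : ℕ → ZMod m)).mulVec s i) := by
  funext i
  have : (A.map (Nat.cast : ℕ → ZMod m)).mulVec s i = ∑ j, (A i j) • s j := by
    simp [Matrix.mulVec, dotProduct, Matrix.map_apply, nsmul_eq_mul]
  rw [this, psi_sum hc, monomialMap]
  exact Finset.prod_congr rfl fun j _ => by rw [psi_nsmul hc]

private lemma conj_iter [NeZero m] (hc : ∀ a b : ℕ, a % m = b % m → c ^ a = c ^ b)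
    {n : ℕ} (A : Matrix (Fin n) (Fin n) ℕ) (k : ℕ) (s : Fin n → ZMod m) :
    (monomialMap A)^[k] (fun j => psi m c (s j)) =
      fun j => psi m c
        ((fun v => (A.map (Nat.cast : ℕ → ZMod m)).mulVec v)^[k] s j) := by
  induction k generalizing s with
  | zero => rfl
  | succ k ih =>
      rw [Function.iterate_succ_apply, conj_step hc, Function.iterate_succ_apply]
      exact ih _

end conj

theorem stmt16 {F : Type*} [Field F] [Fintype F] {n : ℕ}
    (A : Matrix (Fin n) (Fin n) ℕ) (t : ℕ) (ht : 1 ≤ t) :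
    (∃ x : Fin n → F, (∀ i, x i ≠ 0) ∧ (monomialMap A)^[t] x = x ∧
        ∀ k, 0 < k → k < t → (monomialMap A)^[k] x ≠ x) ↔
    (∃ s : Fin n → ZMod (Fintype.card F - 1),
        (fun v => (A.map (Nat.cast : ℕ → ZMod (Fintype.card F - 1))).mulVec v)^[t] s = s ∧
        ∀ k, 0 < k → k < t →
          (fun v => (A.map (Nat.cast : ℕ → ZMod (Fintype.card F - 1))).mulVec v)^[k] s ≠ s) := by
  classical
  set m : ℕ := Fintype.card F - 1 with hm
  have hm1 : 1 ≤ m := by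
    have h2 : 2 ≤ Fintype.card F := Fintype.one_lt_card
    omega
  haveI : NeZero m := ⟨by omega⟩
  obtain ⟨g, hg⟩ := IsCyclic.exists_generator (α := Fˣ)
  have hgo : orderOf g = m := by
    rw [orderOf_eq_card_of_forall_mem_zpowers hg, Nat.card_eq_fintype_card,
      Fintype.card_units]
  set c : F := (g : F) with hcdef
  have hco : orderOf c = m := by rw [← hgo]; exact orderOf_units
  have hgc : ∀ a b : ℕ, g ^ a = g ^ b ↔ a % m = b % m := by
    intro a b
    rw [pow_eq_pow_iff_modEq, hgo]
    rfl
  have hc_iff : ∀ a b : ℕ, c ^ a = c ^ b ↔ a % m = b % m := by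
    intro a b
    rw [← hgc a b]
    constructor
    · intro h
      exact Units.ext (by simpa [hcdef, Units.val_pow_eq_pow_val] using h)
    · intro h
      simp only [hcdef, ← Units.val_pow_eq_pow_val, h]
  have hc : ∀ a b : ℕ, a % m = b % m → c ^ a = c ^ b := fun a b h => (hc_iff a b).2 h
  -- injectivity of psi
  have hinj : Function.Injective (psi m c) := by
    intro x y h
    have : x.val % m = y.val % m := (hc_iff _ _).1 h
    rw [Nat.mod_eq_of_lt (ZMod.val_lt x), Nat.mod_eq_of_lt (ZMod.val_lt y)] at this
    exact ZMod.val_injective m this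
  -- surjectivity onto nonzero elements
  have hsurj : ∀ x : F, x ≠ 0 → ∃ a : ZMod m, psi m c a = x := by
    intro x hx
    obtain ⟨u, rfl⟩ : ∃ u : Fˣ, (u : F) = x := ⟨Units.mk0 x hx, rfl⟩
    obtain ⟨k, hk⟩ := (mem_powers_iff_mem_zpowers).2 (hg u)
    refine ⟨(k : ZMod m), ?_⟩
    unfold psi
    rw [ZMod.val_natCast]
    rw [← hk]
    push_cast
    exact hc _ _ (Nat.mod_mod_of_dvd _ dvd_rfl) ▸ (hc (k % m) k (Nat.mod_mod_of_dvd k dvd_rfl))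
  -- psi never zero
  have hne : ∀ a : ZMod m, psi m c a ≠ 0 := by
    intro a
    unfold psi
    simp only [hcdef, ← Units.val_pow_eq_pow_val]
    exact Units.ne_zero _
  constructor
  · rintro ⟨x, hx0, hxt, hxmin⟩
    choose s hs using fun j => hsurj (x j) (hx0 j)
    have hx : x = fun j => psi m c (s j) := by funext j; rw [hs j]
    refine ⟨s, ?_, ?_⟩
    · have := hxt
      rw [hx, conj_iter hc] at this
      funext j
      exact hinj (congrFun this j)
    · intro k hk hkt hks
      apply hxmin k hk hkt
      rw [hx, conj_iter hc, hks]
  · rintro ⟨s, hst, hsmin⟩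
    refine ⟨fun j => psi m c (s j), fun j => hne _, ?_, ?_⟩
    · rw [conj_iter hc, hst]
    · intro k hk hkt h
      apply hsmin k hk hkt
      rw [conj_iter hc] at h
      funext j
      exact hinj (congrFun h j)
end
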